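/- arXiv:math/0303050 — 8 statements merged into one kernel-verified Lean document; each statement's English description precedes it below -/
import Mathlib

section
/- Let F be the free group on two generators x₁, x₂, and let R₁, R₂, R₃ be the normal closures in F of {x₁}, {x₂}, {x₁x₂⁻¹} respectively. Then: (a) F/R_i is isomorphic to ℤ for each i ∈ {1,2,3}; (b) R_i ⊔ R_j = F for all i ≠ j (i.e. F/R_iR_j is trivial); and (c) [F,F] = ⁅R₁,R₂⁆ = R_i ∩ R_j for all i ≠ j. -/
/-- The elements `x₁`, `x₂`, `x₁x₂⁻¹` of the free group on two generators. -/
def ctrGen : Fin 3 → FreeGroup (Fin 2) :=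
  ![FreeGroup.of 0, FreeGroup.of 1, FreeGroup.of 0 * (FreeGroup.of 1)⁻¹]

/-- The normal closures `R₁`, `R₂`, `R₃` of `{x₁}`, `{x₂}`, `{x₁x₂⁻¹}`. -/
def ctrR (i : Fin 3) : Subgroup (FreeGroup (Fin 2)) :=
  Subgroup.normalClosure {ctrGen i}

instance (i : Fin 3) : (ctrR i).Normal := Subgroup.normalClosure_normal

/-!
Each `Rᵢ` is the kernel of a surjective homomorphism `F → ℤ` given by exponent sums (in `x₂`, in
`x₁`, and in total): modulo `Rᵢ` every generator is a power of one fixed generator, with exponent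
its image in `ℤ`, so anything in the kernel dies modulo `Rᵢ`. Any two of `x₁, x₂, x₁x₂⁻¹`
generate `F`. Modulo `⁅R₁,R₂⁆` the generators commute, so `[F,F] ≤ ⁅R₁,R₂⁆`; conversely an
element of `Rᵢ ∩ Rⱼ` has both exponent sums zero, so it is trivial in `F^ab ≅ ℤ²`.
-/

open Subgroup Multiplicative
open scoped commutatorElement

namespace FreeGroup

variable {α G : Type*} [Group G]

theorem eq_top_of_forall_of_mem {H : Subgroup (FreeGroup α)} (h : ∀ a, of a ∈ H) : H = ⊤ := by
  rw [eq_top_iff, ← closure_range_of, closure_le]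
  rintro _ ⟨a, rfl⟩
  exact h a

theorem commute_map_of_forall_commute {f : FreeGroup α →* G} {g : G}
    (h : ∀ a, Commute (f (of a)) g) (w : FreeGroup α) : Commute (f w) g := by
  have hcomap : (centralizer {g}).comap f = ⊤ :=
    eq_top_of_forall_of_mem fun a => mem_centralizer_singleton_iff.2 (h a)
  exact mem_centralizer_singleton_iff.1 ((eq_top_iff' _).1 hcomap w)

theorem commutator_le_of_forall_commutatorElement_mem {N : Subgroup (FreeGroup α)} [N.Normal]
    (h : ∀ a b, ⁅(of a : FreeGroup α), of b⁆ ∈ N) :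
    ⁅(⊤ : Subgroup (FreeGroup α)), (⊤ : Subgroup (FreeGroup α))⁆ ≤ N := by
  set f := QuotientGroup.mk' N
  have hgen : ∀ a b, Commute (f (of a)) (f (of b)) := fun a b => by
    rw [← commutatorElement_eq_one_iff_commute, ← map_commutatorElement,
      QuotientGroup.mk'_apply, QuotientGroup.eq_one_iff]
    exact h a b
  have hall : ∀ v w, Commute (f v) (f w) := fun v w =>
    commute_map_of_forall_commute (fun a =>
      (commute_map_of_forall_commute (fun b => (hgen a b).symm) w).symm) v
  rw [commutator_le]
  rintro v - w -
  rw [← QuotientGroup.eq_one_iff, ← QuotientGroup.mk'_apply, map_commutatorElement,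
    commutatorElement_eq_one_iff_commute]
  exact hall v w

theorem ker_eq_of_forall_of_eq_zpow {N : Subgroup (FreeGroup α)} [N.Normal]
    {φ : FreeGroup α →* Multiplicative ℤ} (hN : N ≤ φ.ker) (t : FreeGroup α)
    (h : ∀ a, (of a : FreeGroup α ⧸ N) = (t : FreeGroup α ⧸ N) ^ toAdd (φ (of a))) :
    φ.ker = N := by
  have hmk : QuotientGroup.mk' N = (zpowersHom _ (t : FreeGroup α ⧸ N)).comp φ :=
    ext_hom _ _ fun a => by simpa using h a
  refine le_antisymm (fun w hw => ?_) hN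
  rw [← QuotientGroup.eq_one_iff, ← QuotientGroup.mk'_apply, hmk, MonoidHom.comp_apply,
    MonoidHom.mem_ker.1 hw, _root_.map_one]

variable [DecidableEq α]

def exponentSum (a : α) : FreeGroup α →* Multiplicative ℤ :=
  lift (Pi.mulSingle a (ofAdd 1))

@[simp]
theorem exponentSum_of (a b : α) :
    exponentSum a (of b) = (Pi.mulSingle a (ofAdd 1) : α → Multiplicative ℤ) b :=
  lift_apply_of

end FreeGroup

open FreeGroup

local notation "F₂" => FreeGroup (Fin 2)

theorem MonoidHom.surjective_of_map_eq_ofAdd_one {G : Type*} [Group G]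
    {φ : G →* Multiplicative ℤ} {t : G} (ht : φ t = ofAdd 1) : Function.Surjective φ :=
  fun z => ⟨t ^ toAdd z, by rw [map_zpow, ht, ← ofAdd_zsmul, smul_eq_mul, mul_one, ofAdd_toAdd]⟩

theorem mem_commutator_of_exponentSum_eq_one {w : F₂} (h₀ : exponentSum 0 w = 1)
    (h₁ : exponentSum 1 w = 1) : w ∈ ⁅(⊤ : Subgroup F₂), (⊤ : Subgroup F₂)⁆ := by
  let β : Multiplicative ℤ × Multiplicative ℤ →* Abelianization (F₂) :=
    (zpowersHom _ (Abelianization.of (of 0))).coprod (zpowersHom _ (Abelianization.of (of 1)))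
  have hβ : β.comp ((exponentSum 0).prod (exponentSum 1)) = Abelianization.of :=
    ext_hom _ _ fun a => by fin_cases a <;> simp [β]
  rw [← commutator_def, ← Abelianization.ker_of, ← hβ, MonoidHom.mem_ker, MonoidHom.comp_apply,
    MonoidHom.prod_apply, h₀, h₁, Prod.mk_one_one, _root_.map_one]

def ctrHom : Fin 3 → (F₂ →* Multiplicative ℤ) :=
  ![exponentSum 1, exponentSum 0, exponentSum 0 * exponentSum 1]

theorem ctrGen_mem_ctrR (i : Fin 3) : ctrGen i ∈ ctrR i :=
  subset_normalClosure rfl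

theorem ctrR_eq_ker (i : Fin 3) : ctrR i = (ctrHom i).ker := by
  have hle : ctrR i ≤ (ctrHom i).ker := by
    refine normalClosure_le_normal (Set.singleton_subset_iff.2 ?_)
    fin_cases i <;> simp [ctrGen, ctrHom]
  refine (ker_eq_of_forall_of_eq_zpow hle (![of 1, of 0, of 0] i) fun a => ?_).symm
  have hgen := ctrGen_mem_ctrR i
  fin_cases i <;> fin_cases a
  · simpa [ctrHom, ctrGen] using hgen
  · simp [ctrHom]
  · simp [ctrHom]
  · simpa [ctrHom, ctrGen] using hgen
  · simp [ctrHom]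
  · simpa [ctrHom, ctrGen, QuotientGroup.eq_iff_div_mem, eq_comm, div_eq_mul_inv] using hgen

theorem ctrHom_surjective (i : Fin 3) : Function.Surjective (ctrHom i) := by
  fin_cases i
  · exact MonoidHom.surjective_of_map_eq_ofAdd_one (t := of 1) (by simp [ctrHom])
  · exact MonoidHom.surjective_of_map_eq_ofAdd_one (t := of 0) (by simp [ctrHom])
  · exact MonoidHom.surjective_of_map_eq_ofAdd_one (t := of 0) (by simp [ctrHom])

theorem eq_top_of_ctrGen_mem {H : Subgroup (F₂)} {i j : Fin 3} (hij : i ≠ j)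
    (hi : ctrGen i ∈ H) (hj : ctrGen j ∈ H) : H = ⊤ := by
  wlog hlt : i < j generalizing i j
  · exact this hij.symm hj hi (by omega)
  refine eq_top_of_forall_of_mem (Fin.forall_fin_two.2 ?_)
  fin_cases i <;> fin_cases j <;> try exact absurd hlt (by decide)
  · exact ⟨hi, hj⟩
  · exact ⟨hi, by simpa [ctrGen] using mul_mem (inv_mem hj) hi⟩
  · exact ⟨by simpa [ctrGen] using mul_mem hj hi, hi⟩

theorem commutator_le_ctrR (i : Fin 3) : ⁅(⊤ : Subgroup F₂), (⊤ : Subgroup F₂)⁆ ≤ ctrR i :=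
  ctrR_eq_ker i ▸ Abelianization.commutator_subset_ker (ctrHom i)

theorem inf_ctrR_le_commutator {i j : Fin 3} (hij : i ≠ j) :
    ctrR i ⊓ ctrR j ≤ ⁅(⊤ : Subgroup F₂), (⊤ : Subgroup F₂)⁆ := by
  intro w hw
  rw [mem_inf, ctrR_eq_ker, ctrR_eq_ker, MonoidHom.mem_ker, MonoidHom.mem_ker] at hw
  obtain ⟨hi, hj⟩ := hw
  have h : exponentSum 0 w = 1 ∧ exponentSum 1 w = 1 := by
    fin_cases i <;> fin_cases j <;> simp_all [ctrHom]
  exact mem_commutator_of_exponentSum_eq_one h.1 h.2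

theorem commutator_top_eq_commutator_ctrR :
    ⁅(⊤ : Subgroup F₂), (⊤ : Subgroup F₂)⁆ = ⁅ctrR 0, ctrR 1⁆ := by
  refine le_antisymm (commutator_le_of_forall_commutatorElement_mem fun a b => ?_)
    (commutator_mono le_top le_top)
  have h01 : ⁅(of 0 : F₂), of 1⁆ ∈ ⁅ctrR 0, ctrR 1⁆ :=
    commutator_mem_commutator (ctrGen_mem_ctrR 0) (ctrGen_mem_ctrR 1)
  fin_cases a <;> fin_cases b
  · simp
  · exact h01
  · simpa [commutatorElement_inv] using inv_mem h01
  · simp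

/-- (a) `F/Rᵢ ≅ ℤ` for each `i`; (b) `RᵢRⱼ = F` for `i ≠ j` (so `F/RᵢRⱼ = 1`);
(c) `[F,F] = ⁅R₁,R₂⁆ = Rᵢ ∩ Rⱼ` for all `i ≠ j`. -/
theorem counterexample_data :
    (∀ i : Fin 3, Nonempty ((FreeGroup (Fin 2) ⧸ ctrR i) ≃* Multiplicative ℤ)) ∧
    (∀ i j : Fin 3, i ≠ j → ctrR i ⊔ ctrR j = ⊤) ∧
    (⁅(⊤ : Subgroup (FreeGroup (Fin 2))), (⊤ : Subgroup (FreeGroup (Fin 2)))⁆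
        = ⁅ctrR 0, ctrR 1⁆ ∧
      ∀ i j : Fin 3, i ≠ j →
        ⁅(⊤ : Subgroup (FreeGroup (Fin 2))), (⊤ : Subgroup (FreeGroup (Fin 2)))⁆
          = ctrR i ⊓ ctrR j) := by
  refine ⟨fun i => ⟨(QuotientGroup.quotientMulEquivOfEq (ctrR_eq_ker i)).trans
      (QuotientGroup.quotientKerEquivOfSurjective _ (ctrHom_surjective i))⟩,
    fun i j hij => eq_top_of_ctrGen_mem hij (mem_sup_left (ctrGen_mem_ctrR i))
      (mem_sup_right (ctrGen_mem_ctrR j)),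
    commutator_top_eq_commutator_ctrR,
    fun i j hij => le_antisymm (le_inf (commutator_le_ctrR i) (commutator_le_ctrR j))
      (inf_ctrR_le_commutator hij)⟩
end

section
/- Let α : F → G be a group homomorphism with kernel R and let n ≥ 1. Define λ_n : Rⁿ × F → F^{n+1} by λ_n(r₁,…,r_n,f) = (r₁r₂⋯r_nf, r₂⋯r_nf, …, r_nf, f). Then: (a) λ_n is a bijection onto Č(α)_n = {(x₀,…,x_n) ∈ F^{n+1} : α(x₀) = α(x₁) = ⋯ = α(x_n)}; (b) λ_n is multiplicative when Rⁿ × F carries the multiplication (r₁,…,r_n,f)·(r'₁,…,r'_n,f') = (r₁·u₁r'₁u₁⁻¹, …, r_n·u_nr'_nu_n⁻¹, ff') where u_i = r_{i+1}⋯r_nf (so u_n = f), this being the multiplication of the iterated semidirect product R ⋊ (⋯(R ⋊ F)⋯) with all actions given by conjugation in F, while Č(α)_n has componentwise multiplication; and (c) λ commutes with the simplicial structure maps: on F^{n+1} the face d_i omits the i-th coordinate and the degeneracy s_i repeats the i-th coordinate, while on Rⁿ × F the face d₀ drops r₁, d_i (0 < i < n) replaces (r_i, r_{i+1}) by r_ir_{i+1},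 d_n replaces (r_n, f) by r_nf, and s_i inserts 1 in the appropriate position. -/
section

variable {F G : Type*} [Group F] [Group G]

/-- `λₙ(r₁,…,r_n,f) = (r₁r₂⋯r_nf, r₂⋯r_nf, …, r_nf, f)`. -/
def cechLambda (n : ℕ) (p : (Fin n → F) × F) : Fin (n + 1) → F :=
  fun i => ((List.ofFn p.1).drop (i : ℕ)).prod * p.2

/-- `uᵢ = r_{i+1}⋯r_n f`  (so `u_n = f`). -/
def cechU (n : ℕ) (r : Fin n → F) (f : F) (i : Fin n) : F :=
  ((List.ofFn r).drop ((i : ℕ) + 1)).prod * f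

/-- The `i`-th face of `F^{m+2}`: omit the `i`-th coordinate. -/
def tFace {α : Type*} {m : ℕ} (i : Fin (m + 2)) (x : Fin (m + 2) → α) : Fin (m + 1) → α :=
  fun j => x (i.succAbove j)

/-- The `i`-th degeneracy of `F^{m+1}`: repeat the `i`-th coordinate. -/
def tDegen {α : Type*} {m : ℕ} (i : Fin (m + 1)) (x : Fin (m + 1) → α) : Fin (m + 2) → α :=
  fun j => x (i.predAbove j)

/-- The `i`-th face on `Rⁿ⁺¹ × F`: `d₀` drops `r₁`, `dᵢ` (`0 < i < n+1`) replaces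
`(rᵢ, r_{i+1})` by `rᵢr_{i+1}`, and `d_{n+1}` replaces `(r_{n+1}, f)` by `r_{n+1}f`. -/
def rFace {n : ℕ} (i : Fin (n + 2)) (p : (Fin (n + 1) → F) × F) : (Fin n → F) × F :=
  (fun j => if (j : ℕ) + 1 < (i : ℕ) then p.1 j.castSucc
    else if (j : ℕ) + 1 = (i : ℕ) then p.1 j.castSucc * p.1 j.succ
    else p.1 j.succ,
   if (i : ℕ) = n + 1 then p.1 (Fin.last n) * p.2 else p.2)

/-- The `i`-th degeneracy on `Rⁿ × F`: insert `1` in the `i`-th position. -/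
def rDegen {n : ℕ} (i : Fin (n + 1)) (p : (Fin n → F) × F) : (Fin (n + 1) → F) × F :=
  (fun j => if h1 : (j : ℕ) < (i : ℕ) then p.1 ⟨(j : ℕ), by have := i.isLt; omega⟩
    else if h2 : (j : ℕ) = (i : ℕ) then 1
    else p.1 ⟨(j : ℕ) - 1, by have := j.isLt; omega⟩,
   p.2)

private def Pr {F : Type*} [Group F] (n : ℕ) (r : Fin n → F) (k : ℕ) : F :=
  ((List.ofFn r).drop k).prod

private lemma Pr_ge {n : ℕ} (r : Fin n → F) {k : ℕ} (h : n ≤ k) : Pr n r k = 1 := by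
  unfold Pr
  rw [List.drop_eq_nil_of_le (by simp [h])]
  rfl

private lemma Pr_succ {n : ℕ} (r : Fin n → F) {k : ℕ} (h : k < n) :
    Pr n r k = r ⟨k, h⟩ * Pr n r (k + 1) := by
  unfold Pr
  rw [List.drop_eq_getElem_cons (by simpa using h), List.prod_cons]
  simp

private lemma downInd {n : ℕ} {Q : ℕ → Prop} (base : Q n)
    (step : ∀ k, k < n → Q (k + 1) → Q k) : ∀ k, k ≤ n → Q k := by
  have H : ∀ d k, k + d = n → Q k := by
    intro d
    induction d with
    | zero =>
      intro k hk
      have hkn : k = n := by omega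
      subst hkn
      exact base
    | succ d ih => intro k hk; exact step k (by omega) (ih (k+1) (by omega))
  intro k hk
  exact H (n - k) k (by omega)

/-- `λ` is an isomorphism of simplicial groups from `R ⋊ (⋯(R ⋊ F)⋯)` (with conjugation
actions) to the Čech complex of `α`: (a) it is a bijection onto
`Č(α)ₙ = {x ∈ F^{n+1} : α(x₀) = ⋯ = α(x_n)}`; (b) it is multiplicative for the iterated
semidirect product multiplication; (c) it commutes with all faces and degeneracies. -/
theorem cechLambda_iso (α : F →* G) (R : Subgroup F) (hR : R = α.ker) (n : ℕ) (hn : 1 ≤ n) :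
    -- (a)
    (Set.BijOn (cechLambda n) {p : (Fin n → F) × F | ∀ i, p.1 i ∈ R}
      {x : Fin (n + 1) → F | ∀ i j, α (x i) = α (x j)}) ∧
    -- (b)
    (∀ (r r' : Fin n → F) (f f' : F), (∀ i, r i ∈ R) → (∀ i, r' i ∈ R) →
      cechLambda n
          (fun i => r i * (cechU n r f i * r' i * (cechU n r f i)⁻¹), f * f')
        = fun i => cechLambda n (r, f) i * cechLambda n (r', f') i) ∧
    -- (c) faces
    (∀ (m : ℕ) (i : Fin (m + 2)) (p : (Fin (m + 1) → F) × F), (∀ j, p.1 j ∈ R) →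
      tFace i (cechLambda (m + 1) p) = cechLambda m (rFace i p)) ∧
    -- (c) degeneracies
    (∀ (m : ℕ) (i : Fin (m + 1)) (p : (Fin m → F) × F), (∀ j, p.1 j ∈ R) →
      tDegen i (cechLambda m p) = cechLambda (m + 1) (rDegen i p)) := by
  subst hR
  refine ⟨⟨?_, ?_, ?_⟩, ?_, ?_, ?_⟩
  · -- MapsTo
    intro p hp i j
    have hker : ∀ k, α (Pr n p.1 k) = 1 := by
      intro k
      have hmem : Pr n p.1 k ∈ α.ker := by
        apply Subgroup.list_prod_mem
        intro x hx
        have hx' : x ∈ List.ofFn p.1 := List.mem_of_mem_drop hx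
        rw [List.mem_ofFn] at hx'
        obtain ⟨i, rfl⟩ := hx'
        exact hp i
      exact MonoidHom.mem_ker.mp hmem
    show α (Pr n p.1 i * p.2) = α (Pr n p.1 j * p.2)
    rw [map_mul, map_mul, hker, hker]
  · -- InjOn
    intro p hp q hq h
    have hf : p.2 = q.2 := by
      have h2 : Pr n p.1 n * p.2 = Pr n q.1 n * q.2 := congrFun h (Fin.last n)
      rwa [Pr_ge _ le_rfl, Pr_ge _ le_rfl, one_mul, one_mul] at h2
    have htail : ∀ k, Pr n p.1 k * p.2 = Pr n q.1 k * q.2 → Pr n p.1 k = Pr n q.1 k := by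
      intro k hk
      rw [hf] at hk
      exact mul_right_cancel hk
    have hr : p.1 = q.1 := by
      funext i
      have h1 : Pr n p.1 i = Pr n q.1 i := htail _ (congrFun h i.castSucc)
      have h2 : Pr n p.1 (i + 1) = Pr n q.1 (i + 1) := htail _ (congrFun h i.succ)
      rw [Pr_succ p.1 i.isLt, Pr_succ q.1 i.isLt, h2] at h1
      have := mul_right_cancel h1
      simpa using this
    exact Prod.ext hr hf
  · -- SurjOn
    intro x hx
    refine ⟨(fun i => x i.castSucc * (x i.succ)⁻¹, x (Fin.last n)), fun i => ?_, ?_⟩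
    · rw [MonoidHom.mem_ker, map_mul, map_inv, hx i.castSucc i.succ, mul_inv_cancel]
    · have key : ∀ k, k ≤ n → ∀ hk : k < n + 1,
          Pr n (fun i : Fin n => x i.castSucc * (x i.succ)⁻¹) k * x (Fin.last n)
            = x ⟨k, hk⟩ := by
        refine downInd ?_ ?_
        · intro hk
          rw [Pr_ge _ le_rfl, one_mul]
          rfl
        · intro k hk ih hk1
          rw [Pr_succ _ hk, mul_assoc, ih (by omega)]
          exact inv_mul_cancel_right _ _
      funext j
      exact key (j : ℕ) (by omega) j.isLt
  · -- (b)
    intro r r' f f' _ _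
    have key : ∀ k, k ≤ n →
        Pr n (fun i => r i * (cechU n r f i * r' i * (cechU n r f i)⁻¹)) k
          = Pr n r k * (f * Pr n r' k * f⁻¹) := by
      refine downInd ?_ ?_
      · rw [Pr_ge _ le_rfl, Pr_ge _ le_rfl, Pr_ge _ le_rfl]
        group
      · intro k hk ih
        rw [Pr_succ _ hk, Pr_succ r hk, Pr_succ r' hk, ih]
        have hu : cechU n r f ⟨k, hk⟩ = Pr n r (k + 1) * f := rfl
        show r ⟨k, hk⟩ * (cechU n r f ⟨k, hk⟩ * r' ⟨k, hk⟩ * (cechU n r f ⟨k, hk⟩)⁻¹)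
            * (Pr n r (k + 1) * (f * Pr n r' (k + 1) * f⁻¹))
          = r ⟨k, hk⟩ * Pr n r (k + 1) * (f * (r' ⟨k, hk⟩ * Pr n r' (k + 1)) * f⁻¹)
        rw [hu]
        group
    funext i
    show Pr n (fun i => r i * (cechU n r f i * r' i * (cechU n r f i)⁻¹)) i * (f * f')
      = (Pr n r i * f) * (Pr n r' i * f')
    rw [key (i : ℕ) (by omega)]
    group
  · -- (c) faces
    intro m i p _
    have hf' : (rFace i p).2 = if (i : ℕ) = m + 1 then p.1 (Fin.last m) * p.2 else p.2 := rfl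
    have key : ∀ k, k ≤ m →
        Pr m (rFace i p).1 k * (rFace i p).2
          = Pr (m + 1) p.1 (if k < (i : ℕ) then k else k + 1) * p.2 := by
      refine downInd ?_ ?_
      · rw [Pr_ge _ le_rfl, one_mul, hf']
        by_cases him : (i : ℕ) = m + 1
        · rw [if_pos him, if_pos (by omega), Pr_succ p.1 (by omega),
            Pr_ge p.1 le_rfl, mul_one]
          rfl
        · have : ¬ (m < (i : ℕ)) := by have := i.isLt; omega
          rw [if_neg him, if_neg this, Pr_ge p.1 le_rfl, one_mul]
      · intro k hk ih
        rw [Pr_succ _ hk]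
        have hent : (rFace i p).1 ⟨k, hk⟩
            = if k + 1 < (i : ℕ) then p.1 ⟨k, by omega⟩
              else if k + 1 = (i : ℕ) then p.1 ⟨k, by omega⟩ * p.1 ⟨k + 1, by omega⟩
              else p.1 ⟨k + 1, by omega⟩ := rfl
        rcases lt_trichotomy (k + 1) (i : ℕ) with h1 | h1 | h1
        · have e1 : (rFace i p).1 ⟨k, hk⟩ = p.1 ⟨k, by omega⟩ := by
            rw [hent, if_pos h1]
          rw [e1, mul_assoc, ih, if_pos h1, if_pos (show k < (i : ℕ) by omega),
            Pr_succ p.1 (show k < m + 1 by omega), mul_assoc]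
        · have e1 : (rFace i p).1 ⟨k, hk⟩ = p.1 ⟨k, by omega⟩ * p.1 ⟨k + 1, by omega⟩ := by
            rw [hent, if_neg (by omega), if_pos h1]
          rw [e1, mul_assoc, ih, if_neg (show ¬ (k + 1 < (i : ℕ)) by omega),
            if_pos (show k < (i : ℕ) by omega),
            Pr_succ p.1 (show k < m + 1 by omega),
            Pr_succ p.1 (show k + 1 < m + 1 by omega)]
          simp only [mul_assoc]
        · have e1 : (rFace i p).1 ⟨k, hk⟩ = p.1 ⟨k + 1, by omega⟩ := by
            rw [hent, if_neg (by omega), if_neg (by omega)]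
          rw [e1, mul_assoc, ih, if_neg (show ¬ (k + 1 < (i : ℕ)) by omega),
            if_neg (show ¬ (k < (i : ℕ)) by omega),
            Pr_succ p.1 (show k + 1 < m + 1 by omega), mul_assoc]
    funext j
    have hval : ((i.succAbove j : Fin (m + 2)) : ℕ)
        = if (j : ℕ) < (i : ℕ) then (j : ℕ) else (j : ℕ) + 1 := by
      rcases lt_or_ge (j : ℕ) (i : ℕ) with h | h
      · rw [Fin.succAbove_of_castSucc_lt _ _ (by simpa [Fin.lt_def] using h), if_pos h]
        rfl
      · rw [Fin.succAbove_of_le_castSucc _ _ (by simpa [Fin.le_def] using h),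
          if_neg (not_lt.mpr h)]
        rfl
    have lhs_eq : tFace i (cechLambda (m + 1) p) j
        = Pr (m + 1) p.1 ((i.succAbove j : Fin (m + 2)) : ℕ) * p.2 := rfl
    rw [lhs_eq, hval]
    exact (key (j : ℕ) (by omega)).symm
  · -- (c) degeneracies
    intro m i p _
    have key : ∀ k, k ≤ m + 1 →
        Pr (m + 1) (rDegen i p).1 k
          = Pr m p.1 (if k ≤ (i : ℕ) then k else k - 1) := by
      refine downInd ?_ ?_
      · rw [Pr_ge _ le_rfl, if_neg (by have := i.isLt; omega), Pr_ge p.1 (by omega)]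
      · intro k hk ih
        rw [Pr_succ _ hk]
        have hent : (rDegen i p).1 ⟨k, hk⟩
            = if h1 : k < (i : ℕ) then p.1 ⟨k, by have := i.isLt; omega⟩
              else if h2 : k = (i : ℕ) then 1
              else p.1 ⟨k - 1, by omega⟩ := rfl
        rcases lt_trichotomy k (i : ℕ) with h1 | h1 | h1
        · rw [hent, dif_pos h1, ih, if_pos (show k + 1 ≤ (i : ℕ) by omega),
            if_pos (show k ≤ (i : ℕ) by omega),
            Pr_succ p.1 (show k < m by have := i.isLt; omega)]
        · rw [hent, dif_neg (by omega), dif_pos h1, ih,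
            if_neg (show ¬ (k + 1 ≤ (i : ℕ)) by omega),
            if_pos (show k ≤ (i : ℕ) by omega), one_mul, Nat.add_sub_cancel]
        · rw [hent, dif_neg (by omega), dif_neg (by omega), ih,
            if_neg (show ¬ (k + 1 ≤ (i : ℕ)) by omega),
            if_neg (show ¬ (k ≤ (i : ℕ)) by omega)]
          have hk1 : k - 1 < m := by have := i.isLt; omega
          rw [Pr_succ p.1 hk1]
          congr 2
          omega
    funext j
    have hval : ((i.predAbove j : Fin (m + 1)) : ℕ)
        = if (j : ℕ) ≤ (i : ℕ) then (j : ℕ) else (j : ℕ) - 1 := by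
      rcases le_or_gt (j : ℕ) (i : ℕ) with h | h
      · rw [Fin.predAbove_of_le_castSucc _ _ (by simpa [Fin.le_def] using h), if_pos h]
        rfl
      · rw [Fin.predAbove_of_castSucc_lt _ _ (by simpa [Fin.lt_def] using h),
          if_neg (not_le.mpr h)]
        rfl
    have lhs_eq : tDegen i (cechLambda m p) j
        = Pr m p.1 ((i.predAbove j : Fin (m + 1)) : ℕ) * p.2 := rfl
    have rhs_eq : cechLambda (m + 1) (rDegen i p) j
        = Pr (m + 1) (rDegen i p).1 (j : ℕ) * p.2 := rfl
    rw [lhs_eq, rhs_eq, hval, key (j : ℕ) (by omega)]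


end
end

section
/- Let (M,P,μ,φ) be a crossed module and let M₀ = inl(M) be the canonical copy of M in the semidirect product M ⋊ P. Then the commutator subgroup ⁅⊤, M₀⁆ of M ⋊ P (generated by commutators of arbitrary elements of M ⋊ P with elements of M₀) equals inl([P,M]), the canonical copy of [P,M]. In other words, [M ⋊ P, M] = [P,M]. -/
/-- `[P,M]`: the subgroup of `M` generated by the elements `ᵖm·m⁻¹`,
for an action `φ` of `P` on `M`. -/
def actionCommutator {M P : Type*} [Group M] [Group P] (φ : P →* MulAut M) : Subgroup M :=
  Subgroup.closure {x : M | ∃ (p : P) (m : M), x = φ p m * m⁻¹}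

/-! In any semidirect product `⁅(n, p), inl m⁆ = inl (n · ᵖm · n⁻¹ · m⁻¹)`. For a crossed module
the Peiffer identity turns `n · ᵖm · n⁻¹` into `^{μ(n) p}m`, so the commutators generating
`[M ⋊ P, M]` are exactly the images of the generators `ᵖm · m⁻¹` of `[P,M]`. -/

open scoped commutatorElement

namespace SemidirectProduct

variable {M P : Type*} [Group M] [Group P] {φ : P →* MulAut M}

theorem commutatorElement_inl (g : M ⋊[φ] P) (m : M) :
    ⁅g, (inl m : M ⋊[φ] P)⁆ = inl (g.left * φ g.right m * g.left⁻¹ * m⁻¹) := by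
  ext <;> simp [commutatorElement_def, mul_assoc]

theorem commutatorElement_inr_inl (p : P) (m : M) :
    ⁅(inr p : M ⋊[φ] P), (inl m : M ⋊[φ] P)⁆ = inl (φ p m * m⁻¹) := by
  simp [commutatorElement_inl]

theorem commutatorElement_inl_of_peiffer {μ : M →* P}
    (hpeiffer : ∀ m m' : M, φ (μ m) m' = m * m' * m⁻¹) (g : M ⋊[φ] P) (m : M) :
    ⁅g, (inl m : M ⋊[φ] P)⁆ = inl (φ (μ g.left * g.right) m * m⁻¹) := by
  rw [commutatorElement_inl, φ.map_mul, MulAut.mul_apply, hpeiffer]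

end SemidirectProduct

theorem commutator_semidirectProduct_inl_of_crossedModule_general
    (M P : Type*) [Group M] [Group P] (φ : P →* MulAut M) (μ : M →* P)
    (hcm2 : ∀ (m m' : M), φ (μ m) m' = m * m' * m⁻¹) :
    ⁅(⊤ : Subgroup (M ⋊[φ] P)), (SemidirectProduct.inl : M →* M ⋊[φ] P).range⁆ =
      Subgroup.map (SemidirectProduct.inl : M →* M ⋊[φ] P) (actionCommutator φ) := by
  rw [Subgroup.commutator_def, actionCommutator, MonoidHom.map_closure]
  congr 1
  ext x
  constructor
  · rintro ⟨g, -, -, ⟨m, rfl⟩, rfl⟩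
    exact ⟨_, ⟨μ g.left * g.right, m, rfl⟩, (SemidirectProduct.commutatorElement_inl_of_peiffer hcm2 g m).symm⟩
  · rintro ⟨-, ⟨p, m, rfl⟩, rfl⟩
    exact ⟨.inr p, trivial, .inl m, ⟨m, rfl⟩, SemidirectProduct.commutatorElement_inr_inl p m⟩

/-- For a crossed module `(M,P,μ,φ)`, the commutator subgroup `[M ⋊ P, M]` of the
semidirect product with the canonical copy `M₀ = inl(M)` of `M` equals `inl([P,M])`. -/
theorem commutator_semidirectProduct_inl_of_crossedModule
    (M P : Type*) [Group M] [Group P] (φ : P →* MulAut M) (μ : M →* P)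
    (hcm1 : ∀ (p : P) (m : M), μ (φ p m) = p * μ m * p⁻¹)
    (hcm2 : ∀ (m m' : M), φ (μ m) m' = m * m' * m⁻¹) :
    ⁅(⊤ : Subgroup (M ⋊[φ] P)), (SemidirectProduct.inl : M →* M ⋊[φ] P).range⁆ =
      Subgroup.map (SemidirectProduct.inl : M →* M ⋊[φ] P) (actionCommutator φ) :=
  commutator_semidirectProduct_inl_of_crossedModule_general M P φ μ hcm2
end

section
/- Let (F;R₁,…,R_n) be a normal (n+1)-ad of groups which is simple relative to R_j for some 1 ≤ j ≤ n, with witnessing subgroup F' (i.e. F' ∩ R_j = 1 and ⋂_{i∈A}R_i = (⋂_{i∈A}R_i ∩ F')·(⋂_{i∈A}R_i ∩ R_j) for all A ⊆ ⟨n⟩∖{j}), and let k ≥ 1. Then for every A ⊆ ⟨n⟩∖{j}: D_k(F;A) = (D_k(F;A) ∩ F')·D_k(F;A ∪ {j}) (product of subsets). -/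
open Pointwise

/-- Iterated commutator `⁅H₁, ⁅H₂, …, ⁅H_{k-1}, H_k⁆…⁆⁆` of a list of subgroups. -/
def iterCommutator {F : Type*} [Group F] : List (Subgroup F) → Subgroup F
  | [] => ⊥
  | [H] => H
  | H :: t => ⁅H, iterCommutator t⁆

/-- `K_B = ⋂_{i∈B} R_i`, with the convention `K_∅ = F`. -/
def adInf {F : Type*} [Group F] {n : ℕ} (R : Fin n → Subgroup F) (B : Finset (Fin n)) :
    Subgroup F :=
  ⨅ i ∈ B, R i

/-- `D_k(F;A)`: the product (join) of the iterated commutator subgroups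
`⁅K_{A₁},⁅K_{A₂},…,⁅K_{A_{k-1}},K_{A_k}⁆…⁆⁆` over all `k`-tuples `(A₁,…,A_k)` of
(possibly empty) subsets with `A₁ ∪ ⋯ ∪ A_k = A`. -/
def adD {F : Type*} [Group F] {n : ℕ} (R : Fin n → Subgroup F) (k : ℕ) (A : Finset (Fin n)) :
    Subgroup F :=
  ⨆ (c : Fin k → Finset (Fin n)) (_ : Finset.univ.sup c = A),
    iterCommutator (List.ofFn fun i => adInf R (c i))

/-!
Because `R j` is normal, the hypothesis says `K_B = (K_B ∩ F') ⊔ K_{B ∪ {j}}` for `j ∉ B`.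
The subgroups `D_k` obey the recursion `D_{m+1}(A) = ⨆_{C ∪ B = A} ⁅K_C, D_m(B)⁆`, so by induction
on `k` it suffices to split `⁅K_C, D_m(B)⁆` when both entries split. Writing elements of the two
entries as `p r` and `s e`, with `p, s ∈ F'` and `r, e` in the `j`-parts `K_{C ∪ {j}}` and
`D_m(B ∪ {j})`, the commutator `⁅p r, s e⁆` is `⁅p, s⁆ ∈ D_{m+1}(A) ∩ F'` up to conjugates of
commutators with an entry from a `j`-part, and those lie in the normal subgroup `D_{m+1}(A ∪ {j})`.
The reverse inclusion is monotonicity of `D_k`, and a join with a normal subgroup is the product set.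
-/

theorem Fin.univ_sup_succ {α : Type*} [SemilatticeSup α] [OrderBot α] {m : ℕ}
    (f : Fin (m + 1) → α) : Finset.univ.sup f = f 0 ⊔ Finset.univ.sup fun i : Fin m => f i.succ := by
  rw [Fin.univ_succ, Finset.sup_cons, Finset.sup_map]
  rfl

namespace Subgroup

variable {G : Type*} [Group G]

open scoped commutatorElement

theorem normal_iSup {ι : Sort*} {H : ι → Subgroup G} (hH : ∀ i, (H i).Normal) :
    (⨆ i, H i).Normal :=
  normalizer_eq_top_iff.mp <| top_le_iff.mp <|
    (le_iInf fun i => (normalizer_eq_top_iff.mpr (hH i)).ge).trans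
      (iInf_normalizer_le_normalizer_iSup H)

theorem commutator_iSup_right_le {ι : Sort*} (P : Subgroup G) [P.Normal] {H : ι → Subgroup G}
    (hH : ∀ i, (H i).Normal) : ⁅P, ⨆ i, H i⁆ ≤ ⨆ i, ⁅P, H i⁆ := by
  have hN : (⨆ i, ⁅P, H i⁆).Normal := normal_iSup fun i => by
    have := hH i
    infer_instance
  rw [commutator_le]
  intro g hg h hh
  induction hh using iSup_induction' generalizing g with
  | hp i h hh => exact mem_iSup_of_mem i (commutator_mem_commutator hg hh)
  | h1 => simp
  | hmul h₁ h₂ _ _ ih₁ ih₂ =>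
    have : ⁅g, h₁ * h₂⁆ = ⁅g, h₁⁆ * (h₁ * ⁅g, h₂⁆ * h₁⁻¹) := by
      simp only [commutatorElement_def]; group
    rw [this]
    exact mul_mem (ih₁ g hg) (hN.conj_mem _ (ih₂ g hg) h₁)

theorem commutator_sup_sup_le {P M S E W : Subgroup G} [M.Normal] [E.Normal] [hW : W.Normal]
    (hM : ⁅M, S ⊔ E⁆ ≤ W) (hE : ⁅P, E⁆ ≤ W) : ⁅P ⊔ M, S ⊔ E⁆ ≤ ⁅P, S⁆ ⊔ W := by
  rw [commutator_le]
  intro g hg y hy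
  rw [← SetLike.mem_coe, mul_normal] at hg hy
  obtain ⟨p, hp, m, hm, rfl⟩ := hg
  obtain ⟨s, hs, e, he, rfl⟩ := hy
  have key : ⁅p * m, s * e⁆ = (p * ⁅m, s * e⁆ * p⁻¹) * (⁅p, s⁆ * (s * ⁅p, e⁆ * s⁻¹)) := by
    simp only [commutatorElement_def]; group
  rw [key]
  have hmse : p * ⁅m, s * e⁆ * p⁻¹ ∈ W := hW.conj_mem _
    (hM (commutator_mem_commutator hm (mul_mem (mem_sup_left hs) (mem_sup_right he)))) p
  have hpe : s * ⁅p, e⁆ * s⁻¹ ∈ W := hW.conj_mem _ (hE (commutator_mem_commutator hp he)) s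
  exact mul_mem (mem_sup_right hmse)
    (mul_mem (mem_sup_left (commutator_mem_commutator hp hs)) (mem_sup_right hpe))

end Subgroup

section IterCommutator

variable {F : Type*} [Group F]

theorem iterCommutator_cons_of_ne_nil (H : Subgroup F) {l : List (Subgroup F)} (hl : l ≠ []) :
    iterCommutator (H :: l) = ⁅H, iterCommutator l⁆ := by
  cases l with
  | nil => exact absurd rfl hl
  | cons _ _ => rfl

theorem iterCommutator_map_mono {α : Type*} {f g : α → Subgroup F} (h : ∀ x, f x ≤ g x) :
    ∀ l : List α, iterCommutator (l.map f) ≤ iterCommutator (l.map g)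
  | [] => le_rfl
  | [x] => h x
  | x :: y :: t => Subgroup.commutator_mono (h x) (iterCommutator_map_mono h (y :: t))

theorem iterCommutator_normal : ∀ {l : List (Subgroup F)}, (∀ H ∈ l, H.Normal) →
    (iterCommutator l).Normal
  | [], _ => Subgroup.normal_bot
  | [H], hl => hl H (List.mem_singleton_self H)
  | H :: K :: t, hl => by
    have := hl H List.mem_cons_self
    have := iterCommutator_normal fun L hL => hl L (List.mem_cons_of_mem H hL)
    rw [iterCommutator_cons_of_ne_nil H (List.cons_ne_nil K t)]
    infer_instance

end IterCommutator

section AdD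

variable {F : Type*} [Group F] {n : ℕ} (R : Fin n → Subgroup F)

theorem adInf_normal (hR : ∀ i, (R i).Normal) (B : Finset (Fin n)) : (adInf R B).Normal :=
  Subgroup.normal_iInf_normal fun i => Subgroup.normal_iInf_normal fun _ => hR i

theorem adInf_anti {B B' : Finset (Fin n)} (h : B ⊆ B') : adInf R B' ≤ adInf R B :=
  biInf_mono fun _ hi => h hi

theorem adInf_insert (j : Fin n) (B : Finset (Fin n)) :
    adInf R (insert j B) = adInf R B ⊓ R j := by
  rw [adInf, adInf, Finset.iInf_insert, inf_comm]

theorem iterCommutator_adInf_normal (hR : ∀ i, (R i).Normal) {k : ℕ}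
    (c : Fin k → Finset (Fin n)) : (iterCommutator (List.ofFn fun i => adInf R (c i))).Normal :=
  iterCommutator_normal fun H hH => by
    obtain ⟨i, rfl⟩ := List.mem_ofFn.mp hH
    exact adInf_normal R hR _

theorem adD_normal (hR : ∀ i, (R i).Normal) (k : ℕ) (A : Finset (Fin n)) : (adD R k A).Normal :=
  Subgroup.normal_iSup fun c => Subgroup.normal_iSup fun _ => iterCommutator_adInf_normal R hR c

theorem adD_zero (A : Finset (Fin n)) : adD R 0 A = ⊥ :=
  le_bot_iff.mp <| iSup₂_le fun _ _ => le_rfl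

theorem adD_one (A : Finset (Fin n)) : adD R 1 A = adInf R A := by
  refine le_antisymm (iSup₂_le fun c hc => ?_) (le_iSup₂_of_le (fun _ => A) (by simp) le_rfl)
  rw [← hc]
  simp [iterCommutator]

theorem adD_anti (k : ℕ) {B B' : Finset (Fin n)} (h : B ⊆ B') : adD R k B' ≤ adD R k B := by
  refine iSup₂_le fun c hc => le_iSup₂_of_le (fun i => c i ∩ B) ?_ ?_
  · change Finset.univ.sup (fun i => c i ⊓ B) = B
    rw [← Finset.sup_inf_distrib_right, hc]
    exact Finset.inter_eq_right.mpr h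
  · simp only [List.ofFn_eq_map]
    exact iterCommutator_map_mono (fun i => adInf_anti R Finset.inter_subset_left) _

end AdD

section AdDRecursion

variable {F : Type*} [Group F] {n : ℕ} {R : Fin n → Subgroup F}

theorem commutator_adInf_adD_le (hR : ∀ i, (R i).Normal) (C B : Finset (Fin n)) (m : ℕ) :
    ⁅adInf R C, adD R m B⁆ ≤ adD R (m + 1) (C ∪ B) := by
  cases m with
  | zero => simp [adD_zero]
  | succ m =>
    have := adInf_normal R hR C
    have hterm := iterCommutator_adInf_normal R hR (k := m + 1)
    refine (Subgroup.commutator_iSup_right_le _ fun c => Subgroup.normal_iSup fun _ => hterm c).trans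
      (iSup_le fun c => ?_)
    refine (Subgroup.commutator_iSup_right_le _ fun _ => hterm c).trans (iSup_le fun hc => ?_)
    refine le_iSup₂_of_le (Fin.cons C c) ?_ ?_
    · rw [Fin.univ_sup_succ]
      simp [hc]
    · rw [List.ofFn_succ, ← iterCommutator_cons_of_ne_nil _ (by simp)]
      simp

theorem adD_succ (hR : ∀ i, (R i).Normal) {m : ℕ} (hm : m ≠ 0) (A : Finset (Fin n)) :
    adD R (m + 1) A = ⨆ (C : Finset (Fin n)) (B : Finset (Fin n)) (_ : C ∪ B = A),
      ⁅adInf R C, adD R m B⁆ := by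
  refine le_antisymm (iSup₂_le fun c hc => ?_) (iSup_le fun C => iSup₂_le fun B hCB => ?_)
  · obtain ⟨m, rfl⟩ := Nat.exists_eq_succ_of_ne_zero hm
    refine le_iSup_of_le (c 0) <| le_iSup₂_of_le (Finset.univ.sup fun i : Fin (m + 1) => c i.succ)
      (by rw [← hc, Fin.univ_sup_succ c]; rfl) ?_
    rw [List.ofFn_succ, iterCommutator_cons_of_ne_nil _ (by simp)]
    exact Subgroup.commutator_mono le_rfl (le_iSup₂_of_le _ rfl le_rfl)
  · exact hCB ▸ commutator_adInf_adD_le hR C B m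

end AdDRecursion

section Splitting

variable {F : Type*} [Group F] {n : ℕ} {R : Fin n → Subgroup F} {F' : Subgroup F} {j : Fin n}

theorem commutator_adInf_adD_le_inf_sup (hR : ∀ i, (R i).Normal) {C B : Finset (Fin n)} {m : ℕ}
    (hC : adInf R C ≤ (adInf R C ⊓ F') ⊔ adInf R (insert j C))
    (hB : adD R m B ≤ (adD R m B ⊓ F') ⊔ adD R m (insert j B)) :
    ⁅adInf R C, adD R m B⁆ ≤ (adD R (m + 1) (C ∪ B) ⊓ F') ⊔ adD R (m + 1) (insert j (C ∪ B)) := by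
  have := adInf_normal R hR (insert j C)
  have := adD_normal R hR m (insert j B)
  have := adD_normal R hR (m + 1) (insert j (C ∪ B))
  have hM : ⁅adInf R (insert j C), (adD R m B ⊓ F') ⊔ adD R m (insert j B)⁆ ≤
      adD R (m + 1) (insert j (C ∪ B)) := by
    rw [← Finset.insert_union]
    exact (Subgroup.commutator_mono le_rfl
      (sup_le inf_le_left (adD_anti R m (Finset.subset_insert j B)))).trans
      (commutator_adInf_adD_le hR _ B m)
  have hE : ⁅adInf R C ⊓ F', adD R m (insert j B)⁆ ≤ adD R (m + 1) (insert j (C ∪ B)) := by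
    rw [← Finset.union_insert]
    exact (Subgroup.commutator_mono inf_le_left le_rfl).trans (commutator_adInf_adD_le hR C _ m)
  have hF' : ⁅adInf R C ⊓ F', adD R m B ⊓ F'⁆ ≤ adD R (m + 1) (C ∪ B) ⊓ F' :=
    le_inf ((Subgroup.commutator_mono inf_le_left inf_le_left).trans
        (commutator_adInf_adD_le hR C B m))
      ((Subgroup.commutator_mono inf_le_right inf_le_right).trans
        ((Subgroup.commutator_le_sup F' F').trans_eq (sup_idem F')))
  calc ⁅adInf R C, adD R m B⁆
      ≤ ⁅(adInf R C ⊓ F') ⊔ adInf R (insert j C), (adD R m B ⊓ F') ⊔ adD R m (insert j B)⁆ :=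
        Subgroup.commutator_mono hC hB
    _ ≤ ⁅adInf R C ⊓ F', adD R m B ⊓ F'⁆ ⊔ adD R (m + 1) (insert j (C ∪ B)) :=
        Subgroup.commutator_sup_sup_le hM hE
    _ ≤ _ := sup_le_sup_right hF' _

theorem adD_le_inf_sup_adD_insert (hR : ∀ i, (R i).Normal)
    (hsplit : ∀ B, j ∉ B → adInf R B ≤ (adInf R B ⊓ F') ⊔ adInf R (insert j B)) (k : ℕ)
    {A : Finset (Fin n)} (hA : j ∉ A) : adD R k A ≤ (adD R k A ⊓ F') ⊔ adD R k (insert j A) := by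
  induction k generalizing A with
  | zero => simp [adD_zero]
  | succ m ih =>
    rcases eq_or_ne m 0 with rfl | hm
    · simpa [adD_one] using hsplit A hA
    refine (adD_succ hR hm A).le.trans (iSup_le fun C => iSup₂_le fun B hCB => ?_)
    subst hCB
    rw [Finset.notMem_union] at hA
    exact commutator_adInf_adD_le_inf_sup hR (hsplit C hA.1) (ih hA.2)

end Splitting

theorem adD_decomposition_of_simple_general {F : Type*} [Group F] {n : ℕ}
    (R : Fin n → Subgroup F) (hR : ∀ i, (R i).Normal) (k : ℕ)
    (j : Fin n) (F' : Subgroup F)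
    (hF'2 : ∀ A : Finset (Fin n), j ∉ A →
      (adInf R A : Set F) = (↑(adInf R A ⊓ F') : Set F) * (↑(adInf R A ⊓ R j) : Set F)) :
    ∀ A : Finset (Fin n), j ∉ A →
      (adD R k A : Set F) = (↑(adD R k A ⊓ F') : Set F) * (↑(adD R k (insert j A)) : Set F) := by
  have hsplit (B : Finset (Fin n)) (hB : j ∉ B) :
      adInf R B ≤ (adInf R B ⊓ F') ⊔ adInf R (insert j B) := by
    have := adInf_normal R hR (insert j B)
    rw [← SetLike.coe_subset_coe, Subgroup.mul_normal, adInf_insert, ← hF'2 B hB]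
  intro A hA
  have := adD_normal R hR k (insert j A)
  rw [← Subgroup.mul_normal, SetLike.coe_set_eq]
  exact le_antisymm (adD_le_inf_sup_adD_insert hR hsplit k hA)
    (sup_le inf_le_left (adD_anti R k (Finset.subset_insert j A)))

/-- If the normal `(n+1)`-ad `(F;R₁,…,R_n)` is simple relative to `R_j` with witnessing
subgroup `F'`, then for all `A ⊆ ⟨n⟩∖{j}` and `k ≥ 1`:
`D_k(F;A) = (D_k(F;A) ∩ F')·D_k(F;A ∪ {j})`. -/
theorem adD_decomposition_of_simple {F : Type*} [Group F] {n : ℕ}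
    (R : Fin n → Subgroup F) (hR : ∀ i, (R i).Normal) (k : ℕ) (hk : 1 ≤ k)
    (j : Fin n) (F' : Subgroup F)
    (hF'1 : F' ⊓ R j = ⊥)
    (hF'2 : ∀ A : Finset (Fin n), j ∉ A →
      (adInf R A : Set F) = (↑(adInf R A ⊓ F') : Set F) * (↑(adInf R A ⊓ R j) : Set F)) :
    ∀ A : Finset (Fin n), j ∉ A →
      (adD R k A : Set F) = (↑(adD R k A ⊓ F') : Set F) * (↑(adD R k (insert j A)) : Set F) :=
  adD_decomposition_of_simple_general R hR k j F' hF'2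
end

section
/- Let X be a simplicial group, n ≥ 1 and 1 ≤ j ≤ n. Then the normal (j+1)-ad of groups (X_n; Ker d^n_0, …, Ker d^n_{j-1}) is simple relative to Ker d^n_{j-1}; indeed, the subgroup F' = s^{n-1}_{j-1}(X_{n-1}) (the image of the degeneracy s^{n-1}_{j-1} : X_{n-1} → X_n) satisfies F' ∩ Ker d^n_{j-1} = 1 and ⋂_{i∈A} Ker d^n_i = (⋂_{i∈A} Ker d^n_i ∩ F')·(⋂_{i∈A} Ker d^n_i ∩ Ker d^n_{j-1}) for every A ⊆ {0,…,j-2} (including A = ∅, where the intersection is X_n). -/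
/-!
Write `k = j - 1`. Since `d_k ∘ s_k = id`, the image of `s_k` meets `Ker d_k` trivially and every
`x` splits as `x = e x · (e x)⁻¹ x` with `e = s_k ∘ d_k` and `(e x)⁻¹ x ∈ Ker d_k`. For `i < k`
the simplicial identities give `d_i ∘ e = s_{k-1} ∘ d_{k-1} ∘ d_i`, so `e` preserves `Ker d_i`,
and hence every intersection of such kernels, which makes the splitting respect them.
-/

open CategoryTheory Simplicial Pointwise

namespace MonoidHom

variable {G H : Type*} [Group G] [Group H] {d : G →* H} {s : H →* G}

theorem range_inf_ker_eq_bot_of_leftInverse (hds : Function.LeftInverse d s) :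
    s.range ⊓ d.ker = ⊥ := by
  rw [eq_bot_iff]
  rintro _ ⟨⟨y, rfl⟩, hy : s y ∈ d.ker⟩
  rw [mem_ker, hds y] at hy
  simp [hy]

theorem coe_eq_inf_range_mul_inf_ker_of_leftInverse (hds : Function.LeftInverse d s)
    (K : Subgroup G) (hK : ∀ x ∈ K, s (d x) ∈ K) :
    (K : Set G) = ↑(K ⊓ s.range) * ↑(K ⊓ d.ker) := by
  ext x
  constructor
  · intro hx
    refine ⟨s (d x), ⟨hK x hx, d x, rfl⟩, (s (d x))⁻¹ * x,
      ⟨K.mul_mem (K.inv_mem (hK x hx)) hx, ?_⟩, mul_inv_cancel_left _ _⟩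
    change d _ = 1
    rw [map_mul, map_inv, hds, inv_mul_cancel]
  · rintro ⟨a, ha, b, hb, rfl⟩
    exact K.mul_mem ha.1 hb.1

end MonoidHom

namespace CategoryTheory.SimplicialObject

theorem δ_comp_σ_comp_δ_of_le {C : Type*} [Category C] (X : SimplicialObject C) {n : ℕ}
    {i : Fin (n + 2)} {k : Fin (n + 1)} (h : i ≤ k.castSucc) :
    X.δ k.castSucc.succ ≫ X.σ k.succ ≫ X.δ i.castSucc =
      X.δ i.castSucc ≫ X.δ k.castSucc ≫ X.σ k := by
  rw [X.δ_comp_σ_of_le h, ← Category.assoc, X.δ_comp_δ h, Category.assoc]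

theorem σ_δ_mem_ker_δ_of_lt (X : SimplicialObject GrpCat) {n : ℕ} {i : Fin (n + 2)}
    {k : Fin (n + 1)} (h : i < k.castSucc) {x : X _⦋n + 1⦌} (hx : x ∈ (X.δ i).hom.ker) :
    (X.σ k).hom ((X.δ k.castSucc).hom x) ∈ (X.δ i).hom.ker := by
  cases n with
  | zero => simp [Fin.fin_one_eq_zero k] at h
  | succ n =>
    obtain ⟨k, rfl⟩ := Fin.exists_succ_eq.mpr (show k ≠ 0 by rintro rfl; simp at h)
    obtain ⟨i, rfl⟩ := Fin.exists_castSucc_eq.mpr (h.trans_le (Fin.le_last _)).ne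
    rw [Fin.castSucc_lt_castSucc_iff, ← Fin.le_castSucc_iff] at h
    rw [MonoidHom.mem_ker] at hx ⊢
    rw [← Fin.succ_castSucc]
    change (X.δ k.castSucc.succ ≫ X.σ k.succ ≫ X.δ i.castSucc).hom x = 1
    rw [X.δ_comp_σ_comp_δ_of_le h]
    simp [hx]

end CategoryTheory.SimplicialObject

/-- For a simplicial group `X` and `1 ≤ j ≤ n`, the normal `(j+1)`-ad
`(X_n; Ker d^n_0, …, Ker d^n_{j-1})` is simple relative to `Ker d^n_{j-1}`, witnessed by
`F' = s^{n-1}_{j-1}(X_{n-1})`: one has `F' ∩ Ker d^n_{j-1} = 1` and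
`⋂_{i∈A} Ker d^n_i = (⋂_{i∈A} Ker d^n_i ∩ F')·(⋂_{i∈A} Ker d^n_i ∩ Ker d^n_{j-1})`
for every `A ⊆ {0,…,j-2}` (with `⋂_{i∈∅} = X_n`).  Here `n = m+1`. -/
theorem simplicial_kernels_simple (X : SimplicialObject GrpCat) (m : ℕ) (j : ℕ)
    (hj1 : 1 ≤ j) (hj2 : j ≤ m + 1) :
    (X.σ (⟨j - 1, by omega⟩ : Fin (m + 1))).hom.range
        ⊓ MonoidHom.ker (X.δ (⟨j - 1, by omega⟩ : Fin (m + 2))).hom = ⊥ ∧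
    ∀ A : Finset (Fin (m + 2)), (∀ i ∈ A, (i : ℕ) < j - 1) →
      ((⨅ i ∈ A, MonoidHom.ker (X.δ i).hom) : Set (X _⦋m+1⦌)) =
        (↑((⨅ i ∈ A, MonoidHom.ker (X.δ i).hom) ⊓
            (X.σ (⟨j - 1, by omega⟩ : Fin (m + 1))).hom.range) : Set (X _⦋m+1⦌)) *
        (↑((⨅ i ∈ A, MonoidHom.ker (X.δ i).hom) ⊓
            MonoidHom.ker (X.δ (⟨j - 1, by omega⟩ : Fin (m + 2))).hom) : Set (X _⦋m+1⦌)) := by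
  set k : Fin (m + 1) := ⟨j - 1, by omega⟩
  have hds : Function.LeftInverse (X.δ k.castSucc).hom (X.σ k).hom := fun y =>
    congrArg (fun f => GrpCat.Hom.hom f y) X.δ_comp_σ_self
  refine ⟨MonoidHom.range_inf_ker_eq_bot_of_leftInverse hds, fun A hA => ?_⟩
  have hK : ∀ x ∈ ⨅ i ∈ A, (X.δ i).hom.ker,
      (X.σ k).hom ((X.δ k.castSucc).hom x) ∈ ⨅ i ∈ A, (X.δ i).hom.ker := by
    simp only [Subgroup.mem_iInf]
    exact fun x hx i hi => X.σ_δ_mem_ker_δ_of_lt (hA i hi) (hx i hi)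
  calc _ = ((⨅ i ∈ A, (X.δ i).hom.ker : Subgroup _) : Set (X _⦋m+1⦌)) := by
        simp only [Subgroup.coe_iInf, Set.iInf_eq_iInter]
    _ = _ := MonoidHom.coe_eq_inf_range_mul_inf_ker_of_leftInverse hds _ hK
end

section
/- Let X be a simplicial group, n ≥ 2, and let A be a proper subset of {0,1,…,n-1}. Then d^n_n(⋂_{i∈A} Ker d^n_i) = ⋂_{i∈A} Ker d^{n-1}_i, where for A = ∅ this asserts that d^n_n : X_n → X_{n-1} is surjective. -/
open CategoryTheory Simplicial

/-!
The inclusion `⊆` is the simplicial identity `d_i d_n = d_{n-1} d_i` for `i < n`. Conversely,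
for `y` in the right-hand side the degenerate simplex `s_{n-1} y` has last face `y` and kills
every `d_i`, `i ∈ A`, except possibly `d_{n-1}`. A defect at a face `d_{r+1}` with `r + 1 ∈ A`
is removed by multiplying with `(s_r d_{r+1} w)⁻¹`, at the cost of a possible defect at `d_r`.
Since `A` misses some index `k`, this descent ends with a genuine preimage once the defect
reaches `k`.
-/

namespace CategoryTheory.SimplicialObject

variable (X : SimplicialObject GrpCat) {n : ℕ}

lemma δ_δ_last_apply (b : Fin (n + 2)) (w : X _⦋n + 2⦌) :
    X.δ b (X.δ (Fin.last (n + 2)) w) = X.δ (Fin.last (n + 1)) (X.δ b.castSucc w) := by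
  simpa using ConcreteCategory.congr_hom (X.δ_comp_δ (Fin.le_last b)) w

lemma δ_δ_castSucc_apply {i j : Fin (n + 2)} (h : i ≤ j) (w : X _⦋n + 2⦌) :
    X.δ i (X.δ j.succ w) = X.δ j (X.δ i.castSucc w) :=
  ConcreteCategory.congr_hom (X.δ_comp_δ h) w

lemma δ_pred_δ_apply {i : Fin (n + 2)} {j : Fin (n + 3)} (h : i.castSucc < j) (w : X _⦋n + 2⦌) :
    X.δ (j.pred (Fin.ne_zero_of_lt h)) (X.δ i.castSucc w) = X.δ i (X.δ j w) :=
  (ConcreteCategory.congr_hom (X.δ_comp_δ' h) w).symm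

lemma δ_σ_succ_apply (i : Fin (n + 2)) (z : X _⦋n + 1⦌) : X.δ i.succ (X.σ i z) = z :=
  ConcreteCategory.congr_hom X.δ_comp_σ_succ z

lemma δ_castSucc_σ_eq_one_of_lt {i s : Fin (n + 2)} (h : i < s) {z : X _⦋n + 1⦌}
    (hz : X.δ i z = 1) : X.δ i.castSucc (X.σ s z) = 1 := by
  obtain ⟨k, rfl⟩ := Fin.exists_succ_eq.mpr (Fin.ne_zero_of_lt h)
  rw [← ConcreteCategory.comp_apply, X.δ_comp_σ_of_le (Fin.le_castSucc_iff.mpr h),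
    ConcreteCategory.comp_apply, hz, map_one]

lemma δ_σ_eq_one_of_succ_lt {s : Fin (n + 2)} {j : Fin (n + 3)} (h : s.succ < j) {z : X _⦋n + 1⦌}
    (hz : X.δ (j.pred (Fin.ne_zero_of_lt h)) z = 1) : X.δ j (X.σ s z) = 1 := by
  rw [← ConcreteCategory.comp_apply, X.δ_comp_σ_of_gt' h, ConcreteCategory.comp_apply, hz, map_one]

-- The witness is `w * (σ_r (d_{r+1} w))⁻¹`.
lemma exists_δ_succ_castSucc_eq_one (r : Fin (n + 1)) (w : X _⦋n + 2⦌)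
    (hw : X.δ r.succ (X.δ (Fin.last (n + 2)) w) = 1) :
    ∃ w' : X _⦋n + 2⦌, X.δ (Fin.last (n + 2)) w' = X.δ (Fin.last (n + 2)) w ∧
      X.δ r.succ.castSucc w' = 1 ∧
      ∀ i : Fin (n + 2), i ≠ r.castSucc → X.δ i.castSucc w = 1 → X.δ i.castSucc w' = 1 := by
  set c := X.σ r.castSucc (X.δ r.succ.castSucc w)
  have hc_above {j : Fin (n + 3)} (hj : r.succ.castSucc < j) (hwj : X.δ r.succ (X.δ j w) = 1) :
      X.δ j c = 1 :=
    X.δ_σ_eq_one_of_succ_lt (Fin.succ_castSucc r ▸ hj) ((X.δ_pred_δ_apply hj w).trans hwj)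
  have hc_self : X.δ r.succ.castSucc c = X.δ r.succ.castSucc w := by
    simpa only [Fin.succ_castSucc] using X.δ_σ_succ_apply r.castSucc (X.δ r.succ.castSucc w)
  refine ⟨w * c⁻¹, ?_, ?_, fun i hir hwi => ?_⟩
  · rw [map_mul, map_inv, hc_above (Fin.castSucc_lt_last _) hw, inv_one, mul_one]
  · rw [map_mul, map_inv, hc_self, mul_inv_cancel]
  rw [map_mul, map_inv, hwi, one_mul, inv_eq_one]
  rcases lt_trichotomy i r.succ with hi | rfl | hi
  · have hi : i < r.castSucc := lt_of_le_of_ne (Fin.le_castSucc_iff.mpr hi) hir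
    refine X.δ_castSucc_σ_eq_one_of_lt hi ?_
    rw [← Fin.succ_castSucc, X.δ_δ_castSucc_apply hi.le, hwi, map_one]
  · exact hc_self.trans hwi
  · exact hc_above (Fin.castSucc_lt_castSucc_iff.mpr hi) (by rw [hwi, map_one])

lemma exists_δ_last_eq_forall_δ_castSucc_eq_one (A : Finset (Fin (n + 2))) {y : X _⦋n + 1⦌}
    (hy : ∀ i ∈ A, X.δ i y = 1) (r : Fin (n + 2)) (hr : ∃ k ∉ A, k ≤ r) (w : X _⦋n + 2⦌)
    (hw : X.δ (Fin.last (n + 2)) w = y) (hwA : ∀ i ∈ A, i ≠ r → X.δ i.castSucc w = 1) :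
    ∃ x : X _⦋n + 2⦌, X.δ (Fin.last (n + 2)) x = y ∧ ∀ i ∈ A, X.δ i.castSucc x = 1 := by
  induction r using Fin.induction generalizing w with
  | zero =>
    obtain ⟨k, hk, hk0⟩ := hr
    rw [Fin.le_zero_iff.mp hk0] at hk
    exact ⟨w, hw, fun i hi => hwA i hi (ne_of_mem_of_not_mem hi hk)⟩
  | succ r ih =>
    by_cases hrA : r.succ ∈ A
    case neg => exact ⟨w, hw, fun i hi => hwA i hi (ne_of_mem_of_not_mem hi hrA)⟩
    obtain ⟨k, hk, hkr⟩ := hr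
    have hkr : k ≤ r.castSucc :=
      Fin.le_castSucc_iff.mpr (lt_of_le_of_ne hkr (ne_of_mem_of_not_mem hrA hk).symm)
    obtain ⟨w', hw'_last, hw'_r, hw'A⟩ := X.exists_δ_succ_castSucc_eq_one r w (hw ▸ hy _ hrA)
    refine ih ⟨k, hk, hkr⟩ w' (hw'_last.trans hw) fun i hi hir => ?_
    obtain rfl | hir' := eq_or_ne i r.succ
    · exact hw'_r
    · exact hw'A i hir (hwA i hi hir')

end CategoryTheory.SimplicialObject

/-- For a simplicial group `X`, `n = m+2 ≥ 2`, and a proper subset `A ⊊ {0,…,n-1}`: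
`d^n_n(⋂_{i∈A} Ker d^n_i) = ⋂_{i∈A} Ker d^{n-1}_i` (for `A = ∅` this says that
`d^n_n : X_n → X_{n-1}` is surjective). -/
theorem image_last_face_inf_kernels (X : SimplicialObject GrpCat) (m : ℕ)
    (A : Finset (Fin (m + 2))) (hA : A ≠ Finset.univ) :
    Subgroup.map (X.δ (Fin.last (m + 2))).hom
        (⨅ i ∈ A, MonoidHom.ker (X.δ (Fin.castSucc i)).hom) =
      ⨅ i ∈ A, MonoidHom.ker (X.δ i).hom := by
  apply le_antisymm
  · rw [Subgroup.map_le_iff_le_comap]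
    intro w hw
    simp only [Subgroup.mem_comap, Subgroup.mem_iInf, MonoidHom.mem_ker] at hw ⊢
    intro i hi
    rw [X.δ_δ_last_apply, hw i hi, map_one]
  · intro y hy
    simp only [Subgroup.mem_iInf, MonoidHom.mem_ker] at hy
    obtain ⟨k, hk⟩ : ∃ k, k ∉ A := by simpa [Finset.eq_univ_iff_forall] using hA
    have hσ_last : X.δ (Fin.last (m + 2)) (X.σ (Fin.last (m + 1)) y) = y := by
      simpa only [Fin.succ_last] using X.δ_σ_succ_apply (Fin.last (m + 1)) y
    obtain ⟨x, hx, hxA⟩ := X.exists_δ_last_eq_forall_δ_castSucc_eq_one A hy (Fin.last (m + 1))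
      ⟨k, hk, Fin.le_last k⟩ _ hσ_last fun i hi hil =>
        X.δ_castSucc_σ_eq_one_of_lt (Fin.lt_last_iff_ne_last.mpr hil) (hy i hi)
    refine Subgroup.mem_map.mpr ⟨x, ?_, hx⟩
    simpa only [Subgroup.mem_iInf, MonoidHom.mem_ker] using hxA
end

section
/- Let X be a simplicial group, n ≥ 1, and let A be a nonempty proper subset of {0,…,n-1} with |A| = m (so 1 ≤ m ≤ n-1). Let π : X_{n-1} → X_{n-1-m} be the composite of face maps deleting exactly the indices in A, i.e. X applied to the monotone injection [n-1-m] → [n-1] in the simplex category whose image is the complement of A. Then π is surjective and Ker π = ∏_{i∈A} Ker d^{n-1}_i (the join of the kernels); consequently X_{n-1} / ∏_{i∈A} Ker d^{n-1}_i ≅ X_{n-1-m}. -/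
open CategoryTheory Simplicial

instance iSup_normal' {F : Type*} [Group F] {ι : Sort*} (R : ι → Subgroup F)
    [h : ∀ i, (R i).Normal] : (⨆ i, R i).Normal := by
  constructor
  intro x hx g
  have h1 : Subgroup.map (MulAut.conj g).toMonoidHom (⨆ i, R i) ≤ ⨆ i, R i := by
    rw [Subgroup.map_iSup]
    exact iSup_mono fun i => Subgroup.map_le_iff_le_comap.2 fun y hy =>
      Subgroup.mem_comap.2 (by simpa using (h i).conj_mem y hy g)
  exact h1 (Subgroup.mem_map.2 ⟨x, hx, by simp⟩)

/-!
Write `θ = θ' ≫ δ i` with `i ∉ range θ` and pick `k` with `d_i ∘ s_k = id`. Since `s_k`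
splits `d_i`, `ker X(θ) = ker d_i ⊔ s_k (ker X(θ'))`, and by induction `ker X(θ')` is the join
of the `ker d_j` with `j ∉ range θ'`. The simplicial identities send `s_k (ker d_j)` into
`ker d_{i.succAbove j}` as long as `j ≠ k`; choosing `i` at a boundary of `range θ`, so that
its neighbour `i.succAbove k` lies in `range θ`, rules out `j = k`. Surjectivity follows along
the same factorisation, each `d_i` being split by a degeneracy.
-/

namespace MonoidHom

variable {G H K : Type*} [Group G] [Group H] [Group K]

theorem ker_comp_eq_ker_sup_map_ker {f : G →* H} {s : H →* G} (hs : f.comp s = MonoidHom.id H)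
    (g : H →* K) : (g.comp f).ker = f.ker ⊔ g.ker.map s := by
  calc (g.comp f).ker = ((g.ker.map s).map f).comap f := by
        rw [Subgroup.map_map, hs, Subgroup.map_id, comap_ker]
    _ = f.ker ⊔ g.ker.map s := by rw [Subgroup.comap_map_eq, sup_comm]

theorem map_ker_le_ker_of_comp_eq {G' H' : Type*} [Group G'] [Group H'] {f : G →* H}
    {s : G →* G'} {f' : G' →* H'} {s' : H →* H'} (w : f'.comp s = s'.comp f) :
    f.ker.map s ≤ f'.ker := by
  rw [Subgroup.map_le_iff_le_comap, comap_ker, w, ← comap_ker]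
  exact ker_le_comap f _

end MonoidHom

theorem Fin.exists_not_castSucc_iff_succ {n : ℕ} {P : Fin (n + 1) → Prop} {a b : Fin (n + 1)}
    (ha : P a) (hb : ¬P b) : ∃ k : Fin n, ¬(P k.castSucc ↔ P k.succ) := by
  by_contra! h
  have hconst : ∀ i, P i ↔ P 0 := fun i => by
    induction i using Fin.induction with
    | zero => rfl
    | succ k ih => rw [← h k, ih]
  exact hb ((hconst b).2 ((hconst a).1 ha))

theorem Fin.exists_notMem_adjacent_mem {n : ℕ} {S : Set (Fin (n + 2))} {a b : Fin (n + 2)}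
    (ha : a ∈ S) (hb : b ∉ S) :
    ∃ (k : Fin (n + 1)) (i : Fin (n + 2)),
      (i = k.castSucc ∨ i = k.succ) ∧ i ∉ S ∧ i.succAbove k ∈ S := by
  obtain ⟨k, hk⟩ := Fin.exists_not_castSucc_iff_succ (P := (· ∈ S)) ha hb
  by_cases h : k.castSucc ∈ S
  · exact ⟨k, k.succ, .inr rfl, by tauto, by simpa using h⟩
  · exact ⟨k, k.castSucc, .inl rfl, h, by simp only [Fin.succAbove_castSucc_self]; tauto⟩

instance SimplexCategory.epi_to_mk_zero {x : SimplexCategory} (θ : x ⟶ ⦋0⦌) : Epi θ :=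
  SimplexCategory.epi_iff_surjective.2 fun _ => ⟨0, Subsingleton.elim (α := Fin 1) _ _⟩

namespace CategoryTheory.SimplicialObject

variable (X : SimplicialObject GrpCat)

theorem ker_map_op_eq_bot_of_isIso {x y : SimplexCategory} (θ : x ⟶ y) [IsIso θ] :
    (X.map θ.op).hom.ker = ⊥ :=
  (MonoidHom.ker_eq_bot_iff _).2 (ConcreteCategory.bijective_of_isIso (X.map θ.op)).1

theorem map_op_comp_δ {q n : ℕ} (θ : (⦋q⦌ : SimplexCategory) ⟶ ⦋n⦌) (i : Fin (n + 2)) :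
    (X.map (θ ≫ SimplexCategory.δ i).op).hom = (X.map θ.op).hom.comp (X.δ i).hom := by
  rw [op_comp, X.map_comp, GrpCat.hom_comp]
  rfl

theorem δ_comp_σ_eq_id {n : ℕ} {i : Fin (n + 2)} {k : Fin (n + 1)}
    (hik : i = k.castSucc ∨ i = k.succ) : (X.δ i).hom.comp (X.σ k).hom = MonoidHom.id _ := by
  rw [← GrpCat.hom_comp, ← GrpCat.hom_id]
  rcases hik with rfl | rfl
  · rw [δ_comp_σ_self]
  · rw [δ_comp_σ_succ]

theorem map_σ_ker_δ_le {n : ℕ} {i : Fin (n + 3)} {k j : Fin (n + 2)}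
    (hik : i = k.castSucc ∨ i = k.succ) (hjk : j ≠ k) :
    (X.δ j).hom.ker.map (X.σ k).hom ≤ (X.δ (i.succAbove j)).hom.ker := by
  rcases hjk.lt_or_gt with hjk | hjk
  · obtain ⟨k, rfl⟩ := Fin.exists_succ_eq.2 (Fin.ne_zero_of_lt hjk)
    have hij : i.succAbove j = j.castSucc := by
      rcases hik with rfl | rfl
      · exact Fin.succAbove_castSucc_of_lt _ _ hjk
      · exact Fin.succAbove_succ_of_le _ _ hjk.le
    rw [hij]
    exact MonoidHom.map_ker_le_ker_of_comp_eq <| by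
      rw [← GrpCat.hom_comp, ← GrpCat.hom_comp, δ_comp_σ_of_le X (Fin.le_castSucc_iff.2 hjk)]
  · obtain ⟨k, rfl⟩ := Fin.exists_castSucc_eq.2 (Fin.ne_last_of_lt hjk)
    have hij : i.succAbove j = j.succ := by
      rcases hik with rfl | rfl
      · exact Fin.succAbove_castSucc_of_le _ _ hjk.le
      · exact Fin.succAbove_succ_of_lt _ _ hjk
    rw [hij]
    exact MonoidHom.map_ker_le_ker_of_comp_eq <| by
      rw [← GrpCat.hom_comp, ← GrpCat.hom_comp, δ_comp_σ_of_gt X hjk]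

theorem surjective_δ {n : ℕ} (i : Fin (n + 2)) : Function.Surjective (X.δ i) := by
  obtain ⟨k, hik⟩ : ∃ k : Fin (n + 1), i = k.castSucc ∨ i = k.succ := by
    induction i using Fin.lastCases with
    | last => exact ⟨Fin.last n, .inr (Fin.succ_last n).symm⟩
    | cast k => exact ⟨k, .inl rfl⟩
  exact fun y => ⟨X.σ k y, DFunLike.congr_fun (X.δ_comp_σ_eq_id hik) y⟩

theorem surjective_map_op_of_mono {n q : ℕ} (θ : (⦋q⦌ : SimplexCategory) ⟶ ⦋n⦌)
    [Mono θ] : Function.Surjective (X.map θ.op) := by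
  by_cases hθ : Epi θ
  · have := isIso_of_mono_of_epi θ
    exact (ConcreteCategory.bijective_of_isIso (X.map θ.op)).2
  cases n with
  | zero => exact (hθ inferInstance).elim
  | succ n =>
    obtain ⟨i, θ', rfl⟩ := SimplexCategory.eq_comp_δ_of_not_surjective θ
      (by rwa [← SimplexCategory.epi_iff_surjective])
    have := mono_of_mono θ' (SimplexCategory.δ i)
    change Function.Surjective (X.map (θ' ≫ SimplexCategory.δ i).op).hom
    rw [map_op_comp_δ]
    exact (surjective_map_op_of_mono θ').comp (X.surjective_δ i)

theorem ker_δ_le_ker_map_op {n q : ℕ} (θ : (⦋q⦌ : SimplexCategory) ⟶ ⦋n + 1⦌)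
    {i : Fin (n + 2)} (hi : i ∉ Set.range θ.toOrderHom) :
    (X.δ i).hom.ker ≤ (X.map θ.op).hom.ker := by
  rw [← SimplexCategory.factor_δ_spec θ i (fun t ht => hi ⟨t, ht⟩), map_op_comp_δ,
    ← MonoidHom.comap_ker]
  exact (X.δ i).hom.ker_le_comap _

theorem ker_map_op_le_iSup_ker_δ {p q : ℕ} (θ : (⦋q⦌ : SimplexCategory) ⟶ ⦋p + 1⦌)
    [Mono θ] :
    (X.map θ.op).hom.ker ≤ ⨆ (i) (_ : i ∉ Set.range θ.toOrderHom), (X.δ i).hom.ker := by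
  by_cases hθ : Function.Surjective θ.toOrderHom
  · have : Epi θ := SimplexCategory.epi_iff_surjective.2 hθ
    have := isIso_of_mono_of_epi θ
    rw [ker_map_op_eq_bot_of_isIso]
    exact bot_le
  obtain ⟨b, hb⟩ := not_forall.1 hθ
  obtain ⟨k, i, hik, hi, hki⟩ := Fin.exists_notMem_adjacent_mem (Set.mem_range_self 0) hb
  set θ' := SimplexCategory.factor_δ θ i
  have hθ : θ' ≫ SimplexCategory.δ i = θ :=
    SimplexCategory.factor_δ_spec θ i (fun t ht => hi ⟨t, ht⟩)
  have : Mono θ' := by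
    have : Mono (θ' ≫ SimplexCategory.δ i) := hθ ▸ inferInstance
    exact mono_of_mono θ' (SimplexCategory.δ i)
  have hrange (j) :
      i.succAbove j ∈ Set.range θ.toOrderHom ↔ j ∈ Set.range θ'.toOrderHom := by
    have : Set.range θ.toOrderHom = i.succAbove '' Set.range θ'.toOrderHom := by
      rw [← hθ, ← Set.range_comp]
      rfl
    rw [this]
    exact Fin.succAbove_right_injective.mem_set_image
  have hker :
      (X.map θ.op).hom.ker = (X.δ i).hom.ker ⊔ (X.map θ'.op).hom.ker.map (X.σ k).hom := by
    rw [← hθ, map_op_comp_δ, MonoidHom.ker_comp_eq_ker_sup_map_ker (X.δ_comp_σ_eq_id hik)]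
  rw [hker]
  refine sup_le (le_iSup₂_of_le i hi le_rfl) ?_
  cases p with
  | zero =>
    have := isIso_of_mono_of_epi θ'
    rw [ker_map_op_eq_bot_of_isIso, Subgroup.map_bot]
    exact bot_le
  | succ p =>
    refine (Subgroup.map_mono (ker_map_op_le_iSup_ker_δ θ')).trans ?_
    simp only [Subgroup.map_iSup]
    refine iSup₂_le fun j hj => ?_
    have hjk : j ≠ k := by
      rintro rfl
      exact hj ((hrange _).1 hki)
    exact (X.map_σ_ker_δ_le hik hjk).trans
      (le_iSup₂_of_le (i.succAbove j) (by rwa [hrange]) le_rfl)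

theorem ker_map_op_eq_iSup_ker_δ {p q : ℕ} (θ : (⦋q⦌ : SimplexCategory) ⟶ ⦋p + 1⦌)
    [Mono θ] :
    (X.map θ.op).hom.ker = ⨆ (i) (_ : i ∉ Set.range θ.toOrderHom), (X.δ i).hom.ker :=
  le_antisymm (X.ker_map_op_le_iSup_ker_δ θ) (iSup₂_le fun _ hi => X.ker_δ_le_ker_map_op θ hi)

end CategoryTheory.SimplicialObject

theorem kernel_of_composite_face_map_general (X : SimplicialObject GrpCat) (p : ℕ)
    (A : Finset (Fin (p + 2)))
    (q : ℕ)
    (θ : (⦋q⦌ : SimplexCategory) ⟶ ⦋p + 1⦌)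
    (hinj : Function.Injective θ.toOrderHom)
    (him : Set.range θ.toOrderHom = (↑(Aᶜ) : Set (Fin (p + 2)))) :
    Function.Surjective (X.map θ.op) ∧
    MonoidHom.ker (X.map θ.op).hom = ⨆ i ∈ A, MonoidHom.ker (X.δ i).hom ∧
    Nonempty (((X _⦋p+1⦌ : Type _) ⧸ ⨆ i ∈ A, MonoidHom.ker (X.δ i).hom) ≃*
      (X _⦋q⦌ : Type _)) := by
  have : Mono θ := SimplexCategory.mono_iff_injective.2 hinj
  have hsurj := X.surjective_map_op_of_mono θ
  have hker : (X.map θ.op).hom.ker = ⨆ i ∈ A, (X.δ i).hom.ker := by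
    simp only [X.ker_map_op_eq_iSup_ker_δ θ, him, Finset.coe_compl, Set.mem_compl_iff,
      Finset.mem_coe, not_not]
  exact ⟨hsurj, hker, ⟨(QuotientGroup.quotientMulEquivOfEq hker.symm).trans
    (QuotientGroup.quotientKerEquivOfSurjective _ hsurj)⟩⟩

/-- Let `X` be a simplicial group, `A` a nonempty proper subset of `{0,…,p}` of
cardinality `m`, and `θ : [q] → [p]` (`q + m = p`) the monotone injection whose image is
the complement of `A`.  Then `π := X(θ)` is surjective with kernel
`∏_{i∈A} Ker d^p_i = ⨆_{i∈A} Ker (X.δ i)`; consequently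
`X_p / ∏_{i∈A} Ker d^p_i ≅ X_{p-m}`. (Here the level is `p = n-1`.) -/
theorem kernel_of_composite_face_map (X : SimplicialObject GrpCat) (p : ℕ)
    (A : Finset (Fin (p + 2))) (hne : A.Nonempty) (hproper : A ≠ Finset.univ)
    (q : ℕ) (hq : q + A.card = p + 1)
    (θ : (⦋q⦌ : SimplexCategory) ⟶ ⦋p + 1⦌)
    (hinj : Function.Injective θ.toOrderHom)
    (him : Set.range θ.toOrderHom = (↑(Aᶜ) : Set (Fin (p + 2)))) :
    Function.Surjective (X.map θ.op) ∧
    MonoidHom.ker (X.map θ.op).hom = ⨆ i ∈ A, MonoidHom.ker (X.δ i).hom ∧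
    Nonempty (((X _⦋p+1⦌ : Type _) ⧸ ⨆ i ∈ A, MonoidHom.ker (X.δ i).hom) ≃*
      (X _⦋q⦌ : Type _)) :=
  kernel_of_composite_face_map_general X p A q θ hinj him
end

section
/- Let G and H be bisimplicial groups with horizontal faces/degeneracies d^h_i, s^h_i and vertical faces/degeneracies d^v_i, s^v_i, and let α, β : G → H be morphisms of bisimplicial groups. Suppose for every m ≥ 0 there is a vertical simplicial homotopy between the morphisms of simplicial groups α_{m,*}, β_{m,*} : G_{m,*} → H_{m,*}, i.e. group homomorphisms h^v_i : G_{m,n} → H_{m,n+1} (0 ≤ i ≤ n) satisfying d^v_0∘h^v_0 = α_{m,n}, d^v_{n+1}∘h^v_n = β_{m,n}, d^v_i∘h^v_j = h^v_{j-1}∘d^v_i for i < j, d^v_i∘h^v_j = h^v_j∘d^v_{i-1} for i > j+1, and d^v_{j+1}∘h^v_{j+1} = d^v_{j+1}∘h^v_j, and suppose in addition that d^h_j∘h^v_i = h^v_i∘d^h_j for all applicable indices. Then the homomorphisms h'_i := h^v_i∘s^h_i : G_{n,n} → H_{n+1,n+1} (0 ≤ i ≤ n) satisfy the same simplicial homotopy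 identities between the diagonal morphisms Δα, Δβ : ΔG → ΔH, i.e. Δα and Δβ are simplicially homotopic. -/
/-!
A face `d_i = d^v_i ≫ d^h_i` of `h'_j = s^h_j ≫ h^v_j` is computed by applying a vertical
homotopy identity to `h^v_j ≫ d^v_i`, then sliding `d^h_i` past the homotopy (it commutes with
horizontal faces) and past the vertical faces (naturality) until it meets `s^h_j`, where a
horizontal simplicial identity applies. When `d^h_i` cancels `s^h_j` (i.e. `i ∈ {j, j + 1}`) the
face collapses to a vertical face of the homotopy on level `n`, so the end-point identities and
`d_{j+1} h'_{j+1} = d_{j+1} h'_j` reduce to their vertical counterparts.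
-/

open CategoryTheory Simplicial Opposite

section

variable {C : Type*} [Category C] {G H : SimplicialObject (SimplicialObject C)}

theorem homotopy_face_of_σ_comp_δ_eq_id {n : ℕ} {k : Fin (n + 1)} {i l : Fin (n + 2)}
    {f : (G.obj (op ⦋n + 1⦌)) _⦋n⦌ ⟶ (H.obj (op ⦋n + 1⦌)) _⦋n + 1⦌}
    {g : (G.obj (op ⦋n⦌)) _⦋n⦌ ⟶ (H.obj (op ⦋n⦌)) _⦋n + 1⦌}
    (hfg : f ≫ (H.δ i).app (op ⦋n + 1⦌) = (G.δ i).app (op ⦋n⦌) ≫ g)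
    (hσδ : G.σ k ≫ G.δ i = 𝟙 _) :
    ((G.σ k).app (op ⦋n⦌) ≫ f) ≫ ((H.obj (op ⦋n + 1⦌)).δ l ≫ (H.δ i).app (op ⦋n⦌))
      = g ≫ (H.obj (op ⦋n⦌)).δ l := by
  rw [SimplicialObject.δ_naturality, Category.assoc, reassoc_of% hfg, ← NatTrans.comp_app_assoc,
    hσδ, NatTrans.id_app, Category.id_comp]

theorem homotopy_face_of_σ_comp_δ_eq {n : ℕ} {j : Fin (n + 2)} {i : Fin (n + 3)}
    {i' : Fin (n + 2)} {j' : Fin (n + 1)}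
    {f : (G.obj (op ⦋n + 2⦌)) _⦋n + 1⦌ ⟶ (H.obj (op ⦋n + 2⦌)) _⦋n + 2⦌}
    {g : (G.obj (op ⦋n + 2⦌)) _⦋n⦌ ⟶ (H.obj (op ⦋n + 2⦌)) _⦋n + 1⦌}
    {g' : (G.obj (op ⦋n + 1⦌)) _⦋n⦌ ⟶ (H.obj (op ⦋n + 1⦌)) _⦋n + 1⦌}
    (hf : f ≫ (H.obj (op ⦋n + 2⦌)).δ i = (G.obj (op ⦋n + 2⦌)).δ i' ≫ g)
    (hg : g ≫ (H.δ i).app (op ⦋n + 1⦌) = (G.δ i).app (op ⦋n⦌) ≫ g')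
    (hσδ : G.σ j ≫ G.δ i = G.δ i' ≫ G.σ j') :
    ((G.σ j).app (op ⦋n + 1⦌) ≫ f) ≫ ((H.obj (op ⦋n + 2⦌)).δ i ≫ (H.δ i).app (op ⦋n + 1⦌))
      = ((G.obj (op ⦋n + 1⦌)).δ i' ≫ (G.δ i').app (op ⦋n⦌))
          ≫ ((G.σ j').app (op ⦋n⦌) ≫ g') := by
  simp only [Category.assoc]
  rw [reassoc_of% hf, hg, ← SimplicialObject.δ_naturality_assoc, ← NatTrans.comp_app_assoc, hσδ,
    NatTrans.comp_app_assoc]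

end

/-- Let `G, H` be bisimplicial groups (horizontal = outer index, vertical = inner index)
and `α, β : G ⟶ H` morphisms.  Given, for each `m`, a vertical simplicial homotopy
`hv m` between `α_{m,*}` and `β_{m,*}` which commutes with the horizontal faces
(`d^h_j ∘ h^v_i = h^v_i ∘ d^h_j`), the maps `h'ᵢ = h^v_i ∘ s^h_i : G_{n,n} → H_{n+1,n+1}`
satisfy the simplicial homotopy identities between the diagonal morphisms
`Δα, Δβ : ΔG → ΔH`; i.e. `Δα` and `Δβ` are simplicially homotopic. -/
theorem diagonal_homotopy_of_vertical_homotopy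
    (G H : SimplicialObject (SimplicialObject GrpCat)) (α β : G ⟶ H)
    (hv : ∀ (m n : ℕ) (_ : Fin (n + 1)),
      ((G.obj (op ⦋m⦌)) _⦋n⦌ ⟶ (H.obj (op ⦋m⦌)) _⦋n+1⦌))
    -- vertical homotopy identities
    (hv1 : ∀ (m n : ℕ),
      hv m n 0 ≫ (H.obj (op ⦋m⦌)).δ (0 : Fin (n + 2)) = (α.app (op ⦋m⦌)).app (op ⦋n⦌))
    (hv2 : ∀ (m n : ℕ),
      hv m n (Fin.last n) ≫ (H.obj (op ⦋m⦌)).δ (Fin.last (n + 1))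
        = (β.app (op ⦋m⦌)).app (op ⦋n⦌))
    (hv3 : ∀ (m n : ℕ) (i j : ℕ) (h1 : i < j) (h2 : j ≤ n + 1),
      hv m (n + 1) ⟨j, by omega⟩ ≫ (H.obj (op ⦋m⦌)).δ (⟨i, by omega⟩ : Fin (n + 3))
        = (G.obj (op ⦋m⦌)).δ (⟨i, by omega⟩ : Fin (n + 2)) ≫ hv m n ⟨j - 1, by omega⟩)
    (hv4 : ∀ (m n : ℕ) (i j : ℕ) (h1 : j + 1 < i) (h2 : i ≤ n + 2) (h3 : j ≤ n + 1),
      hv m (n + 1) ⟨j, by omega⟩ ≫ (H.obj (op ⦋m⦌)).δ (⟨i, by omega⟩ : Fin (n + 3))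
        = (G.obj (op ⦋m⦌)).δ (⟨i - 1, by omega⟩ : Fin (n + 2)) ≫ hv m n ⟨j, by omega⟩)
    (hv5 : ∀ (m n : ℕ) (j : ℕ) (h1 : j + 1 ≤ n),
      hv m n ⟨j + 1, by omega⟩ ≫ (H.obj (op ⦋m⦌)).δ (⟨j + 1, by omega⟩ : Fin (n + 2))
        = hv m n ⟨j, by omega⟩ ≫ (H.obj (op ⦋m⦌)).δ (⟨j + 1, by omega⟩ : Fin (n + 2)))
    -- the vertical homotopy commutes with the horizontal faces
    (hcomm : ∀ (m n : ℕ) (j : Fin (m + 2)) (i : Fin (n + 1)),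
      hv (m + 1) n i ≫ (H.δ j).app (op ⦋n+1⦌)
        = (G.δ j).app (op ⦋n⦌) ≫ hv m n i) :
    -- conclusion: `h'ᵢ := s^h_i ≫ h^v_i` is a simplicial homotopy between `Δα` and `Δβ`
    (∀ n : ℕ,
      ((G.σ (0 : Fin (n + 1))).app (op ⦋n⦌) ≫ hv (n + 1) n 0)
          ≫ ((H.obj (op ⦋n+1⦌)).δ (0 : Fin (n + 2)) ≫ (H.δ (0 : Fin (n + 2))).app (op ⦋n⦌))
        = (α.app (op ⦋n⦌)).app (op ⦋n⦌)) ∧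
    (∀ n : ℕ,
      ((G.σ (Fin.last n)).app (op ⦋n⦌) ≫ hv (n + 1) n (Fin.last n))
          ≫ ((H.obj (op ⦋n+1⦌)).δ (Fin.last (n + 1))
              ≫ (H.δ (Fin.last (n + 1))).app (op ⦋n⦌))
        = (β.app (op ⦋n⦌)).app (op ⦋n⦌)) ∧
    (∀ (n : ℕ) (i j : ℕ) (h1 : i < j) (h2 : j ≤ n + 1),
      ((G.σ (⟨j, by omega⟩ : Fin (n + 2))).app (op ⦋n+1⦌)
            ≫ hv (n + 2) (n + 1) ⟨j, by omega⟩)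
          ≫ ((H.obj (op ⦋n+2⦌)).δ (⟨i, by omega⟩ : Fin (n + 3))
              ≫ (H.δ (⟨i, by omega⟩ : Fin (n + 3))).app (op ⦋n+1⦌))
        = ((G.obj (op ⦋n+1⦌)).δ (⟨i, by omega⟩ : Fin (n + 2))
              ≫ (G.δ (⟨i, by omega⟩ : Fin (n + 2))).app (op ⦋n⦌))
            ≫ ((G.σ (⟨j - 1, by omega⟩ : Fin (n + 1))).app (op ⦋n⦌)
              ≫ hv (n + 1) n ⟨j - 1, by omega⟩)) ∧
    (∀ (n : ℕ) (i j : ℕ) (h1 : j + 1 < i) (h2 : i ≤ n + 2) (h3 : j ≤ n + 1),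
      ((G.σ (⟨j, by omega⟩ : Fin (n + 2))).app (op ⦋n+1⦌)
            ≫ hv (n + 2) (n + 1) ⟨j, by omega⟩)
          ≫ ((H.obj (op ⦋n+2⦌)).δ (⟨i, by omega⟩ : Fin (n + 3))
              ≫ (H.δ (⟨i, by omega⟩ : Fin (n + 3))).app (op ⦋n+1⦌))
        = ((G.obj (op ⦋n+1⦌)).δ (⟨i - 1, by omega⟩ : Fin (n + 2))
              ≫ (G.δ (⟨i - 1, by omega⟩ : Fin (n + 2))).app (op ⦋n⦌))
            ≫ ((G.σ (⟨j, by omega⟩ : Fin (n + 1))).app (op ⦋n⦌)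
              ≫ hv (n + 1) n ⟨j, by omega⟩)) ∧
    (∀ (n : ℕ) (j : ℕ) (h1 : j + 1 ≤ n),
      ((G.σ (⟨j + 1, by omega⟩ : Fin (n + 1))).app (op ⦋n⦌)
            ≫ hv (n + 1) n ⟨j + 1, by omega⟩)
          ≫ ((H.obj (op ⦋n+1⦌)).δ (⟨j + 1, by omega⟩ : Fin (n + 2))
              ≫ (H.δ (⟨j + 1, by omega⟩ : Fin (n + 2))).app (op ⦋n⦌))
        = ((G.σ (⟨j, by omega⟩ : Fin (n + 1))).app (op ⦋n⦌)
            ≫ hv (n + 1) n ⟨j, by omega⟩)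
          ≫ ((H.obj (op ⦋n+1⦌)).δ (⟨j + 1, by omega⟩ : Fin (n + 2))
              ≫ (H.δ (⟨j + 1, by omega⟩ : Fin (n + 2))).app (op ⦋n⦌))) := by
  refine ⟨fun n ↦ ?_, fun n ↦ ?_, fun n i j h1 h2 ↦ ?_, fun n i j h1 h2 h3 ↦ ?_, fun n j h1 ↦ ?_⟩
  · rw [homotopy_face_of_σ_comp_δ_eq_id (hcomm n n 0 0) (G.δ_comp_σ_self' rfl), hv1]
  · rw [homotopy_face_of_σ_comp_δ_eq_id (hcomm n n (Fin.last (n + 1)) (Fin.last n))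
      (G.δ_comp_σ_succ' (Fin.succ_last n).symm), hv2]
  · obtain ⟨k, rfl⟩ : ∃ k, j = k + 1 := ⟨j - 1, by omega⟩
    exact homotopy_face_of_σ_comp_δ_eq (hv3 (n + 2) n i (k + 1) h1 h2) (hcomm (n + 1) n _ _)
      (G.δ_comp_σ_of_le (i := ⟨i, by omega⟩) (j := ⟨k, by omega⟩)
        (by rw [Fin.castSucc_mk, Fin.mk_le_mk]; omega))
  · exact homotopy_face_of_σ_comp_δ_eq (hv4 (n + 2) n i j h1 h2 h3) (hcomm (n + 1) n _ _)
      (G.δ_comp_σ_of_gt' (i := ⟨i, by omega⟩) (j := ⟨j, by omega⟩)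
        (by rw [Fin.succ_mk, Fin.mk_lt_mk]; omega))
  · rw [homotopy_face_of_σ_comp_δ_eq_id (hcomm n n _ _)
        (G.δ_comp_σ_self' (i := ⟨j + 1, by omega⟩) (j := ⟨j + 1, by omega⟩) rfl),
      homotopy_face_of_σ_comp_δ_eq_id (hcomm n n _ _)
        (G.δ_comp_σ_succ' (i := ⟨j, by omega⟩) (j := ⟨j + 1, by omega⟩) rfl)]
    exact hv5 n n j h1
end
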